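/- arXiv:1812.06166 — 5 statements merged into one kernel-verified Lean document; each statement's English description precedes it below -/
import Mathlib

section
/- Every n-dimensional Archimedean copula is Schur-concave: if C(u₁,…,uₙ) = φ⁻¹(∑ᵢ φ(uᵢ)) where φ : [0,1] → [0,∞] is strictly decreasing with φ(1) = 0, then u ≼_m v implies C(u) ≥ C(v). -/
open Finset ENNReal

/-- Sum of the `j` smallest entries of `x`. -/
noncomputable def sumSmallest {n : ℕ} (j : ℕ) (x : Fin n → ℝ) : ℝ :=
  sInf ((fun s : Finset (Fin n) => ∑ i ∈ s, x i) '' {s : Finset (Fin n) | s.card = j})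

/-- `x` is majorized by `y`. -/
def Majorized {n : ℕ} (x y : Fin n → ℝ) : Prop :=
  (∑ i, x i = ∑ i, y i) ∧
    ∀ j : ℕ, 1 ≤ j → j ≤ n - 1 → sumSmallest j y ≤ sumSmallest j x

/-!
Put `f t = (φ t).toReal` on `(0, 1]`. The inverse `φ⁻¹` is midpoint convex and decreasing, hence
convex, and a strictly decreasing left inverse of a convex function is convex, so `f` is convex.
Karamata's inequality then gives `∑ f (u i) ≤ ∑ f (v i)`, and `φ⁻¹` being decreasing turns this
into `C v ≤ C u`. Karamata is proved by choosing subgradients `cᵢ` of `f` at the increasingly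
sorted `uᵢ`, monotone in `i`: then `f (vᵢ) ≥ f (uᵢ) + cᵢ (vᵢ - uᵢ)`, and summation by parts
against the partial-sum inequalities of majorization gives `∑ cᵢ (vᵢ - uᵢ) ≥ 0`.
A zero coordinate of `v` makes its sum `∞`, where `φ⁻¹` is least; otherwise majorization keeps
`u` positive.
-/

open Filter Topology

lemma apply_dyadic_le_of_midpoint {h : ℝ → ℝ}
    (hmid : ∀ a ∈ Set.Icc (0 : ℝ) 1, ∀ b ∈ Set.Icc (0 : ℝ) 1, h ((a + b) / 2) ≤ (h a + h b) / 2)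
    (N k : ℕ) (hk : k ≤ 2 ^ N) :
    h (k / 2 ^ N) ≤ (1 - k / 2 ^ N) * h 0 + k / 2 ^ N * h 1 := by
  induction N generalizing k with
  | zero =>
    interval_cases k <;> simp
  | succ N ih =>
    rw [pow_succ] at hk
    have hmem : ∀ k : ℕ, k ≤ 2 ^ N → (k : ℝ) / 2 ^ N ∈ Set.Icc (0 : ℝ) 1 := fun k hk =>
      ⟨by positivity, div_le_one_of_le₀ (by exact_mod_cast hk) (by positivity)⟩
    obtain ⟨m, rfl | rfl⟩ := Nat.even_or_odd' k
    · have hdiv : ((2 * m : ℕ) : ℝ) / 2 ^ (N + 1) = m / 2 ^ N := by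
        push_cast; rw [pow_succ]; field_simp
      rw [hdiv]
      exact ih m (by omega)
    · have hdiv : ((2 * m + 1 : ℕ) : ℝ) / 2 ^ (N + 1) =
          (m / 2 ^ N + ((m + 1 : ℕ) : ℝ) / 2 ^ N) / 2 := by
        push_cast; rw [pow_succ]; field_simp; ring
      have hm := ih m (by omega)
      have hm' := ih (m + 1) (by omega)
      rw [hdiv]
      calc _ ≤ _ := hmid _ (hmem m (by omega)) _ (hmem (m + 1) (by omega))
        _ ≤ _ := by linarith

theorem AntitoneOn.convexOn_of_midpoint {s : Set ℝ} {g : ℝ → ℝ} (hs : Convex ℝ s)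
    (hg : AntitoneOn g s) (hmid : ∀ x ∈ s, ∀ y ∈ s, g ((x + y) / 2) ≤ (g x + g y) / 2) :
    ConvexOn ℝ s g := by
  refine LinearOrder.convexOn_of_lt hs fun x hx y hy hxy a b ha hb hab => ?_
  obtain rfl : a = 1 - b := by linarith
  let h : ℝ → ℝ := fun p => g ((1 - p) * x + p * y)
  have hseg : ∀ p ∈ Set.Icc (0 : ℝ) 1, (1 - p) * x + p * y ∈ s := fun p hp =>
    hs hx hy (by linarith [hp.2]) hp.1 (by ring)
  have hmid' : ∀ p ∈ Set.Icc (0 : ℝ) 1, ∀ q ∈ Set.Icc (0 : ℝ) 1,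
      h ((p + q) / 2) ≤ (h p + h q) / 2 := by
    intro p hp q hq
    convert hmid _ (hseg p hp) _ (hseg q hq) using 2
    ring
  have hanti : AntitoneOn h (Set.Icc 0 1) := fun p hp q hq hpq =>
    hg (hseg p hp) (hseg q hq) (by nlinarith)
  let p : ℕ → ℝ := fun N => ⌊b * 2 ^ N⌋₊ / 2 ^ N
  have hp : Tendsto p atTop (𝓝 b) :=
    (tendsto_nat_floor_mul_div_atTop hb.le).comp (tendsto_pow_atTop_atTop_of_one_lt one_lt_two)
  have hle : ∀ N, h b ≤ (1 - p N) * h 0 + p N * h 1 := by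
    intro N
    have hb1 : b ≤ 1 := by linarith
    have hpb : p N ≤ b := (div_le_iff₀ (by positivity)).2 (Nat.floor_le (by positivity))
    have hk : ⌊b * 2 ^ N⌋₊ ≤ 2 ^ N := by
      apply Nat.floor_le_of_le
      push_cast
      nlinarith [pow_pos (two_pos : (0 : ℝ) < 2) N]
    calc h b ≤ h (p N) := hanti ⟨by positivity, hpb.trans hb1⟩ ⟨hb.le, hb1⟩ hpb
      _ ≤ _ := apply_dyadic_le_of_midpoint hmid' N _ hk
  have hlim := ge_of_tendsto' (((tendsto_const_nhds.sub hp).mul tendsto_const_nhds).add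
    (hp.mul tendsto_const_nhds)) hle
  simpa [h] using hlim

theorem StrictAntiOn.convexOn_of_leftInvOn {f g : ℝ → ℝ} {s t : Set ℝ} (hs : Convex ℝ s)
    (hf : StrictAntiOn f s) (hg : ConvexOn ℝ t g) (hst : Set.MapsTo f s t)
    (hgf : Set.LeftInvOn g f s) : ConvexOn ℝ s f := by
  refine LinearOrder.convexOn_of_lt hs fun x hx y hy hxy a b ha hb hab => ?_
  set z := a • x + b • y
  have hz : z ∈ s := hs hx hy ha.le hb.le hab
  have hxz : x < z := by
    have : z - x = b * (y - x) := by
      simp only [z, smul_eq_mul]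
      linear_combination x * hab
    nlinarith [mul_pos hb (sub_pos.2 hxy)]
  set c := a • f x + b • f y
  by_contra! hcz
  have hc : c ∈ t := hg.1 (hst hx) (hst hy) ha.le hb.le hab
  have hgc : g c ≤ z := by
    have := hg.2 (hst hx) (hst hy) ha.le hb.le hab
    rwa [hgf hx, hgf hy] at this
  -- on the segment from `c` to `f x`, `g` is `≤ z` at `c`, `= z` at `f z` and `< z` at `f x`
  have hseg : f z ∈ openSegment ℝ c (f x) := by
    rw [openSegment_eq_Ioo (hcz.trans (hf hx hz hxz))]
    exact ⟨hcz, hf hx hz hxz⟩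
  have := hg.lt_left_of_right_lt hc (hst hx) hseg (by rw [hgf hx, hgf hz]; exact hxz)
  rw [hgf hz] at this
  linarith

theorem ConvexOn.exists_monotoneOn_subgradient {s : Set ℝ} {f : ℝ → ℝ} (hf : ConvexOn ℝ s f)
    (Q : Finset ℝ) (hQ : ↑Q ⊆ s) :
    ∃ c : ℝ → ℝ, MonotoneOn c Q ∧ ∀ a ∈ Q, ∀ b ∈ Q, f a + c a * (b - a) ≤ f b := by
  classical
  -- the lower bound `L` keeps the maximum nonempty at the least point of `Q`
  obtain ⟨L, hL⟩ := ((Q ×ˢ Q).image fun p => slope f p.1 p.2).bddBelow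
  let c : ℝ → ℝ := fun a =>
    (insert L ((Q.filter (· < a)).image (slope f · a))).max' (insert_nonempty _ _)
  have hL_le : ∀ a b, a ∈ Q → b ∈ Q → L ≤ slope f a b := fun a b ha hb =>
    hL (mem_image_of_mem (fun p : ℝ × ℝ => slope f p.1 p.2)
      (mem_product.2 ⟨ha, hb⟩ : (a, b) ∈ Q ×ˢ Q))
  have le_c : ∀ a, ∀ w ∈ Q, w < a → slope f w a ≤ c a := fun a w hw hwa =>
    le_max' _ _ (mem_insert_of_mem (mem_image_of_mem (slope f · a)
      (mem_filter.2 ⟨hw, hwa⟩ : w ∈ Q.filter (· < a))))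
  have c_le : ∀ a m, L ≤ m → (∀ w ∈ Q, w < a → slope f w a ≤ m) → c a ≤ m := by
    intro a m hLm hm
    refine max'_le _ _ _ fun r hr => ?_
    rcases mem_insert.1 hr with rfl | hr
    · exact hLm
    · obtain ⟨w, hw, rfl⟩ := mem_image.1 hr
      exact hm w (mem_filter.1 hw).1 (mem_filter.1 hw).2
  refine ⟨c, fun a ha a' ha' haa' => ?_, fun a ha b hb => ?_⟩
  · refine c_le a _ (le_max' _ _ (mem_insert_self _ _)) fun w hw hwa => ?_
    have hwa' := hwa.trans_le haa'
    exact (hf.slope_mono (hQ hw) ⟨hQ ha, hwa.ne'⟩ ⟨hQ ha', hwa'.ne'⟩ haa').trans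
      (le_c a' w hw hwa')
  · have hslope : f a + slope f a b * (b - a) = f b := by
      rw [mul_comm, ← smul_eq_mul, sub_smul_slope, vsub_eq_sub]; ring
    rcases lt_trichotomy b a with hba | rfl | hab
    · have h := le_c a b hb hba
      rw [slope_comm] at h
      have := mul_le_mul_of_nonpos_right h (sub_nonpos.2 hba.le)
      linarith
    · simp
    · have h : c a ≤ slope f a b := c_le a _ (hL_le a b ha hb) fun w hw hwa => by
        rw [slope_comm]
        exact hf.slope_mono (hQ ha) ⟨hQ hw, hwa.ne⟩ ⟨hQ hb, hab.ne'⟩ (hwa.trans hab).le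
      have := mul_le_mul_of_nonneg_right h (sub_nonneg.2 hab.le)
      linarith

theorem sum_range_mul_nonneg_of_monotoneOn {c d : ℕ → ℝ} {n : ℕ}
    (hc : MonotoneOn c (Set.Iio n)) (hd : ∀ k < n, ∑ i ∈ range k, d i ≤ 0)
    (hn : ∑ i ∈ range n, d i = 0) : 0 ≤ ∑ i ∈ range n, c i * d i := by
  have h := sum_range_by_parts c d n
  simp only [smul_eq_mul, hn, mul_zero, zero_sub] at h
  rw [h, neg_nonneg]
  refine sum_nonpos fun i hi => mul_nonpos_of_nonneg_of_nonpos ?_ (hd _ ?_)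
  · rw [mem_range] at hi
    exact sub_nonneg.2 (hc (Set.mem_Iio.2 (by omega)) (Set.mem_Iio.2 (by omega)) i.le_succ)
  · rw [mem_range] at hi
    omega

theorem ConvexOn.sum_range_le_of_sum_range_le {s : Set ℝ} {f : ℝ → ℝ} (hf : ConvexOn ℝ s f)
    {n : ℕ} {x y : ℕ → ℝ} (hxs : ∀ i < n, x i ∈ s) (hys : ∀ i < n, y i ∈ s)
    (hx : MonotoneOn x (Set.Iio n)) (hpre : ∀ k < n, ∑ i ∈ range k, y i ≤ ∑ i ∈ range k, x i)
    (htot : ∑ i ∈ range n, x i = ∑ i ∈ range n, y i) :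
    ∑ i ∈ range n, f (x i) ≤ ∑ i ∈ range n, f (y i) := by
  classical
  set Q := (range n).image x ∪ (range n).image y
  have hxQ : ∀ i < n, x i ∈ Q := fun i hi =>
    mem_union_left _ (mem_image_of_mem x (mem_range.2 hi))
  have hyQ : ∀ i < n, y i ∈ Q := fun i hi =>
    mem_union_right _ (mem_image_of_mem y (mem_range.2 hi))
  have hQs : ↑Q ⊆ s := by
    intro r hr
    rcases mem_union.1 hr with hr | hr <;> obtain ⟨i, hi, rfl⟩ := mem_image.1 hr
    exacts [hxs i (mem_range.1 hi), hys i (mem_range.1 hi)]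
  obtain ⟨c, hc, hsub⟩ := hf.exists_monotoneOn_subgradient Q hQs
  have habel : 0 ≤ ∑ i ∈ range n, c (x i) * (y i - x i) := by
    refine sum_range_mul_nonneg_of_monotoneOn (fun i hi j hj hij => hc (hxQ i hi) (hxQ j hj)
      (hx hi hj hij)) (fun k hk => ?_) (by rw [sum_sub_distrib, htot, sub_self])
    rw [sum_sub_distrib]
    linarith [hpre k hk]
  calc ∑ i ∈ range n, f (x i) ≤ ∑ i ∈ range n, (f (x i) + c (x i) * (y i - x i)) := by
        rw [sum_add_distrib]; linarith
    _ ≤ ∑ i ∈ range n, f (y i) := sum_le_sum fun i hi =>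
        hsub _ (hxQ i (mem_range.1 hi)) _ (hyQ i (mem_range.1 hi))

/-- The entries of `x` in increasing order, padded with zeros. -/
noncomputable def sortedSeq {n : ℕ} (x : Fin n → ℝ) (k : ℕ) : ℝ :=
  if h : k < n then x (Tuple.sort x ⟨k, h⟩) else 0

section sortedSeq

variable {n : ℕ} (x : Fin n → ℝ)

lemma sortedSeq_of_lt {k : ℕ} (hk : k < n) : sortedSeq x k = x (Tuple.sort x ⟨k, hk⟩) :=
  dif_pos hk

lemma monotoneOn_sortedSeq : MonotoneOn (sortedSeq x) (Set.Iio n) := fun i hi j hj hij => by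
  rw [sortedSeq_of_lt x hi, sortedSeq_of_lt x hj]
  exact Tuple.monotone_sort x hij

lemma sum_range_sortedSeq_eq_sum_castLE {j : ℕ} (hj : j ≤ n) :
    ∑ k ∈ range j, sortedSeq x k = ∑ k : Fin j, x (Tuple.sort x (Fin.castLE hj k)) := by
  rw [← Fin.sum_univ_eq_sum_range]
  exact sum_congr rfl fun k _ => by rw [sortedSeq_of_lt x (k.2.trans_le hj)]; rfl

lemma sum_range_sortedSeq (F : ℝ → ℝ) : ∑ k ∈ range n, F (sortedSeq x k) = ∑ i, F (x i) := by
  rw [← Fin.sum_univ_eq_sum_range (fun k => F (sortedSeq x k))]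
  simp only [sortedSeq_of_lt x (Fin.is_lt _)]
  exact Equiv.sum_comp (Tuple.sort x) (F ∘ x)

lemma Fin.val_le_orderEmbedding {j : ℕ} (e : Fin j ↪o Fin n) (k : Fin j) : (k : ℕ) ≤ e k := by
  have hsub : (Finset.Iio k).map e.toEmbedding ⊆ Finset.Iio (e k) := by
    intro i hi
    obtain ⟨l, hl, rfl⟩ := mem_map.1 hi
    simpa using (mem_Iio.1 hl)
  simpa using card_le_card hsub

lemma sum_range_sortedSeq_le_sum (t : Finset (Fin n)) {j : ℕ} (ht : t.card = j) :
    ∑ k ∈ range j, sortedSeq x k ≤ ∑ i ∈ t, x i := by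
  have hj : j ≤ n := ht ▸ (card_le_univ t).trans_eq (Fintype.card_fin n)
  set t' := t.map (Tuple.sort x).symm.toEmbedding
  have ht' : t'.card = j := by rw [card_map, ht]
  set e := t'.orderEmbOfFin ht'
  have hsum : ∑ i ∈ t, x i = ∑ k : Fin j, x (Tuple.sort x (e k)) := by
    calc ∑ i ∈ t, x i = ∑ i ∈ t', x (Tuple.sort x i) := by simp [t']
      _ = _ := by
        rw [← t'.image_orderEmbOfFin_univ ht', sum_image fun _ _ _ _ h => e.injective h]
  rw [hsum, sum_range_sortedSeq_eq_sum_castLE x hj]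
  exact sum_le_sum fun k _ => Tuple.monotone_sort x (Fin.val_le_orderEmbedding e k)

lemma sumSmallest_eq_sum_range_sortedSeq {j : ℕ} (hj : j ≤ n) :
    sumSmallest j x = ∑ k ∈ range j, sortedSeq x k := by
  refine IsLeast.csInf_eq ⟨⟨univ.map ((Fin.castLEEmb hj).trans (Tuple.sort x).toEmbedding),
    by simp, ?_⟩, ?_⟩
  · simp [sum_range_sortedSeq_eq_sum_castLE x hj]
  · rintro _ ⟨t, ht, rfl⟩
    exact sum_range_sortedSeq_le_sum x t ht

end sortedSeq

namespace Majorized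

variable {n : ℕ} {x y : Fin n → ℝ}

/-- Karamata's majorization inequality. -/
theorem sum_le_sum_of_convexOn {s : Set ℝ} {f : ℝ → ℝ} (hf : ConvexOn ℝ s f)
    (h : Majorized x y) (hx : ∀ i, x i ∈ s) (hy : ∀ i, y i ∈ s) :
    ∑ i, f (x i) ≤ ∑ i, f (y i) := by
  rw [← sum_range_sortedSeq x f, ← sum_range_sortedSeq y f]
  refine hf.sum_range_le_of_sum_range_le (fun k hk => ?_) (fun k hk => ?_)
    (monotoneOn_sortedSeq x) (fun k hk => ?_) ?_
  · rw [sortedSeq_of_lt x hk]; exact hx _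
  · rw [sortedSeq_of_lt y hk]; exact hy _
  · rcases Nat.eq_zero_or_pos k with rfl | hk0
    · simp
    rw [← sumSmallest_eq_sum_range_sortedSeq x hk.le, ← sumSmallest_eq_sum_range_sortedSeq y hk.le]
    exact h.2 k hk0 (by omega)
  · have hx := sum_range_sortedSeq x id
    have hy := sum_range_sortedSeq y id
    simp only [id] at hx hy
    rw [hx, hy]
    exact h.1

lemma exists_le (h : Majorized x y) (i : Fin n) : ∃ i', y i' ≤ x i := by
  rcases Nat.lt_or_ge n 2 with hn | hn
  · obtain rfl : n = 1 := by have := i.pos; omega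
    refine ⟨i, le_of_eq ?_⟩
    simpa [Subsingleton.elim i 0] using h.1.symm
  · refine ⟨Tuple.sort y ⟨0, by omega⟩, ?_⟩
    have h1 := h.2 1 le_rfl (by omega)
    rw [sumSmallest_eq_sum_range_sortedSeq y (by omega),
      sumSmallest_eq_sum_range_sortedSeq x (by omega)] at h1
    calc y (Tuple.sort y ⟨0, _⟩) = ∑ k ∈ range 1, sortedSeq y k := by
          rw [sum_range_one, sortedSeq_of_lt]
      _ ≤ ∑ k ∈ range 1, sortedSeq x k := h1
      _ ≤ ∑ i' ∈ {i}, x i' := sum_range_sortedSeq_le_sum x {i} (card_singleton i)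
      _ = x i := sum_singleton _ _

end Majorized

section generator

variable {φ : ℝ → ℝ≥0∞} {φinv : ℝ≥0∞ → ℝ}

lemma generator_ne_top (hφanti : StrictAntiOn φ (Set.Icc 0 1)) (hφ0 : φ 0 = ⊤) {t : ℝ}
    (ht : t ∈ Set.Ioc (0 : ℝ) 1) : φ t ≠ ⊤ :=
  (hφ0 ▸ hφanti ⟨le_rfl, zero_le_one⟩ (Set.Ioc_subset_Icc_self ht) ht.1).ne

lemma convexOn_toReal_generator (hφanti : StrictAntiOn φ (Set.Icc 0 1)) (hφ0 : φ 0 = ⊤)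
    (hinv : ∀ t ∈ Set.Icc (0 : ℝ) 1, φinv (φ t) = t) (hinv_anti : Antitone φinv)
    (hinv_convex : ∀ a b : ℝ≥0∞, φinv ((a + b) / 2) ≤ (φinv a + φinv b) / 2) :
    ConvexOn ℝ (Set.Ioc 0 1) fun t => (φ t).toReal := by
  have hg : ConvexOn ℝ (Set.Ici 0) fun r => φinv (ENNReal.ofReal r) := by
    refine AntitoneOn.convexOn_of_midpoint (convex_Ici 0)
      (fun a _ b _ hab => hinv_anti (ENNReal.ofReal_le_ofReal hab)) fun a ha b hb => ?_
    rw [ENNReal.ofReal_div_of_pos two_pos, ENNReal.ofReal_add ha hb, ENNReal.ofReal_ofNat]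
    exact hinv_convex _ _
  refine StrictAntiOn.convexOn_of_leftInvOn (convex_Ioc 0 1) (fun a ha b hb hab => ?_) hg
    (fun _ _ => ENNReal.toReal_nonneg) fun t ht => ?_
  · exact (ENNReal.toReal_lt_toReal (generator_ne_top hφanti hφ0 hb)
      (generator_ne_top hφanti hφ0 ha)).2
      (hφanti (Set.Ioc_subset_Icc_self ha) (Set.Ioc_subset_Icc_self hb) hab)
  · simp only [ENNReal.ofReal_toReal (generator_ne_top hφanti hφ0 ht)]
    exact hinv t (Set.Ioc_subset_Icc_self ht)

end generator

theorem archimedean_copula_schurConcave_general {n : ℕ}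
    (φ : ℝ → ℝ≥0∞) (φinv : ℝ≥0∞ → ℝ)
    (hφanti : StrictAntiOn φ (Set.Icc 0 1))
    (hφ0 : φ 0 = ⊤)
    (hinv : ∀ t ∈ Set.Icc (0:ℝ) 1, φinv (φ t) = t)
    (hinv_anti : Antitone φinv)
    (hinv_convex : ∀ a b : ℝ≥0∞, φinv ((a + b) / 2) ≤ (φinv a + φinv b) / 2)
    (C : (Fin n → ℝ) → ℝ)
    (hC : ∀ u : Fin n → ℝ, C u = φinv (∑ i, φ (u i)))
    (u v : Fin n → ℝ)
    (hu : ∀ i, u i ∈ Set.Icc (0:ℝ) 1) (hv : ∀ i, v i ∈ Set.Icc (0:ℝ) 1)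
    (hmaj : Majorized u v) :
    C v ≤ C u := by
  rw [hC u, hC v]
  by_cases hv0 : ∃ i, v i = 0
  · obtain ⟨i, hi⟩ := hv0
    rw [ENNReal.sum_eq_top.2 ⟨i, mem_univ i, by rw [hi, hφ0]⟩]
    exact hinv_anti le_top
  push Not at hv0
  have hvpos : ∀ i, v i ∈ Set.Ioc (0 : ℝ) 1 := fun i => ⟨(hv i).1.lt_of_ne' (hv0 i), (hv i).2⟩
  have hupos : ∀ i, u i ∈ Set.Ioc (0 : ℝ) 1 := fun i => by
    obtain ⟨i', hi'⟩ := hmaj.exists_le i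
    exact ⟨(hvpos i').1.trans_le hi', (hu i).2⟩
  have hfin : ∀ w : Fin n → ℝ, (∀ i, w i ∈ Set.Ioc (0 : ℝ) 1) → ∀ i ∈ univ, φ (w i) ≠ ⊤ :=
    fun w hw i _ => generator_ne_top hφanti hφ0 (hw i)
  have hsum := hmaj.sum_le_sum_of_convexOn
    (convexOn_toReal_generator hφanti hφ0 hinv hinv_anti hinv_convex) hupos hvpos
  rw [← ENNReal.toReal_sum (hfin u hupos), ← ENNReal.toReal_sum (hfin v hvpos),
    ENNReal.toReal_le_toReal (ENNReal.sum_ne_top.2 (hfin u hupos))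
      (ENNReal.sum_ne_top.2 (hfin v hvpos))] at hsum
  exact hinv_anti hsum

/-- Every `n`-dimensional Archimedean copula is Schur-concave: if
`C u = φ⁻¹ (∑ i, φ (u i))` with generator `φ : [0,1] → [0,∞]` strictly decreasing,
`φ 1 = 0`, `φ 0 = ∞`, and `φ⁻¹` decreasing and (midpoint) convex, then
`u ≼_m v` implies `C u ≥ C v`. -/
theorem archimedean_copula_schurConcave {n : ℕ}
    (φ : ℝ → ℝ≥0∞) (φinv : ℝ≥0∞ → ℝ)
    (hφanti : StrictAntiOn φ (Set.Icc 0 1))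
    (hφ1 : φ 1 = 0) (hφ0 : φ 0 = ⊤)
    (hinv : ∀ t ∈ Set.Icc (0:ℝ) 1, φinv (φ t) = t)
    (hinv_anti : Antitone φinv)
    (hinv_convex : ∀ a b : ℝ≥0∞, φinv ((a + b) / 2) ≤ (φinv a + φinv b) / 2)
    (C : (Fin n → ℝ) → ℝ)
    (hC : ∀ u : Fin n → ℝ, C u = φinv (∑ i, φ (u i)))
    (u v : Fin n → ℝ)
    (hu : ∀ i, u i ∈ Set.Icc (0:ℝ) 1) (hv : ∀ i, v i ∈ Set.Icc (0:ℝ) 1)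
    (hmaj : Majorized u v) :
    C v ≤ C u :=
  archimedean_copula_schurConcave_general φ φinv hφanti hφ0 hinv hinv_anti hinv_convex C hC u v hu
    hv hmaj
end

section
/- Let F̄(x) ∈ (0,1] be a baseline survival function, θ ≥ 1, and suppose ∏ᵢ pᵢ = ∏ᵢ p*ᵢ ∈ (0,1). Under the Gumbel–Hougaard copula with PHR margins F̄(x;λᵢ) = F̄(x)^{λᵢ}, the smallest claim amount Y_{1:n} has density (for x > 0) proportional to the density of a random variable with survival function F̄(x)^{Λ} where Λ = (∑ᵢ λᵢ^θ)^{1/θ}. Then Y*_{1:n} ≤_lr Y_{1:n} if and only if ∑ᵢ λᵢ^θ = ∑ᵢ (λ*ᵢ)^θ. -/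
/-!
For `x > 0` the likelihood ratio is `c * F̄(x) ^ d` with `c = (A/A*)^{1/θ}` and
`d = A^{1/θ} - A*^{1/θ}`, while at the atom it equals `1`. Monotonicity on `(0,∞)` forces
`d ≤ 0` since `F̄` is strictly decreasing, and comparing the atom with the right limit at `0`
forces `c ≥ 1`; both hold exactly when `A = A*`, in which case the ratio is identically `1`.
-/

open Filter Topology Set

section
variable {g : ℝ → ℝ} {c d : ℝ}

theorem one_le_of_monotoneOn_ite_mul_rpow (hg : ContinuousWithinAt g (Ioi 0) 0)
    (hg0 : g 0 = 1)
    (hf : MonotoneOn (fun x => if x = 0 then 1 else c * g x ^ d) (Ici 0)) : 1 ≤ c := by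
  have hlim : Tendsto (fun x => c * g x ^ d) (𝓝[>] 0) (𝓝 c) := by
    simpa [hg0] using ((hg.rpow_const (p := d) (Or.inl (by simp [hg0]))).const_mul c).tendsto
  refine ge_of_tendsto hlim (eventually_nhdsWithin_of_forall fun x (hx : 0 < x) => ?_)
  simpa [hx.ne'] using hf self_mem_Ici hx.le hx.le

theorem nonpos_of_monotoneOn_ite_mul_rpow (hc : 0 < c) (hpos : ∀ x, 0 < x → 0 < g x)
    (hanti : StrictAntiOn g (Ici 0))
    (hf : MonotoneOn (fun x => if x = 0 then 1 else c * g x ^ d) (Ici 0)) : d ≤ 0 := by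
  by_contra! hd
  have h21 : g 2 ^ d < g 1 ^ d :=
    Real.rpow_lt_rpow (hpos 2 two_pos).le (hanti (by norm_num) (by norm_num) one_lt_two) hd
  have h12 : c * g 1 ^ d ≤ c * g 2 ^ d := by
    simpa using hf (show (1 : ℝ) ∈ Ici 0 by norm_num) (show (2 : ℝ) ∈ Ici 0 by norm_num)
      one_le_two
  exact (mul_lt_mul_of_pos_left h21 hc).not_ge h12

theorem monotoneOn_ite_mul_rpow (hc : 1 ≤ c) (hd : d ≤ 0) (hpos : ∀ x, 0 < x → 0 < g x)
    (hg0 : g 0 = 1) (hanti : AntitoneOn g (Ici 0)) :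
    MonotoneOn (fun x => if x = 0 then 1 else c * g x ^ d) (Ici 0) := by
  intro a ha b hb hab
  rcases (mem_Ici.mp hb).eq_or_lt with rfl | hb'
  · simp [le_antisymm hab ha]
  rcases (mem_Ici.mp ha).eq_or_lt with rfl | ha'
  · have hgb : g b ≤ 1 := hg0 ▸ hanti self_mem_Ici hb hab
    simpa [hb'.ne'] using
      one_le_mul_of_one_le_of_one_le hc
        (Real.one_le_rpow_of_pos_of_le_one_of_nonpos (hpos b hb') hgb hd)
  · simp only [ha'.ne', hb'.ne', if_false]
    exact mul_le_mul_of_nonneg_left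
      (Real.rpow_le_rpow_of_nonpos (hpos b hb') (hanti ha hb hab) hd) (by linarith)

theorem monotoneOn_ite_mul_rpow_iff (hc : 0 < c) (hpos : ∀ x, 0 < x → 0 < g x) (hg0 : g 0 = 1)
    (hanti : StrictAntiOn g (Ici 0)) (hg : ContinuousWithinAt g (Ioi 0) 0) :
    MonotoneOn (fun x => if x = 0 then 1 else c * g x ^ d) (Ici 0) ↔ 1 ≤ c ∧ d ≤ 0 :=
  ⟨fun hf => ⟨one_le_of_monotoneOn_ite_mul_rpow hg hg0 hf,
      nonpos_of_monotoneOn_ite_mul_rpow hc hpos hanti hf⟩,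
    fun ⟨h1, h2⟩ => monotoneOn_ite_mul_rpow h1 h2 hpos hg0 hanti.antitoneOn⟩
end

theorem one_le_div_rpow_and_rpow_sub_nonpos_iff {a b r : ℝ} (ha : 0 < a) (hb : 0 < b)
    (hr : 0 < r) :
    1 ≤ (a / b) ^ r ∧ a ^ r - b ^ r ≤ 0 ↔ a = b := by
  rw [Real.div_rpow ha.le hb.le, one_le_div (by positivity), sub_nonpos,
    Real.rpow_le_rpow_iff hb.le ha.le hr, Real.rpow_le_rpow_iff ha.le hb.le hr, and_comm]
  exact le_antisymm_iff.symm

theorem smallest_claim_lr_iff_sums_general {n : ℕ} (hn : 0 < n) (θ : ℝ) (hθ : 1 ≤ θ)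
    (Fbar : ℝ → ℝ)
    (hFpos : ∀ x, 0 < Fbar x)
    (hF0 : Fbar 0 = 1) (hFanti : StrictAntiOn Fbar (Set.Ici 0))
    (hFcont : Continuous Fbar)
    (lam lamstar : Fin n → ℝ)
    (hlam : ∀ i, 0 < lam i) (hlamstar : ∀ i, 0 < lamstar i)
    (p pstar : ℝ) (hp : p ∈ Set.Ioo (0:ℝ) 1)
    (hpp : p = pstar) :
    MonotoneOn (fun x : ℝ =>
        if x = 0 then (1 - p) / (1 - pstar)
        else (p / pstar) * ((∑ i, lam i ^ θ) / (∑ i, lamstar i ^ θ)) ^ (1 / θ) *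
          Fbar x ^ ((∑ i, lam i ^ θ) ^ (1 / θ) - (∑ i, lamstar i ^ θ) ^ (1 / θ)))
      (Set.Ici 0) ↔
      (∑ i, lam i ^ θ) = ∑ i, lamstar i ^ θ := by
  subst hpp
  have : Nonempty (Fin n) := ⟨⟨0, hn⟩⟩
  have hA : 0 < ∑ i, lam i ^ θ :=
    Finset.sum_pos (fun i _ => Real.rpow_pos_of_pos (hlam i) θ) Finset.univ_nonempty
  have hB : 0 < ∑ i, lamstar i ^ θ :=
    Finset.sum_pos (fun i _ => Real.rpow_pos_of_pos (hlamstar i) θ) Finset.univ_nonempty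
  simp only [div_self (sub_pos.mpr hp.2).ne', div_self hp.1.ne', one_mul]
  rw [monotoneOn_ite_mul_rpow_iff (by positivity) (fun x _ => hFpos x) hF0 hFanti
    hFcont.continuousWithinAt]
  exact one_le_div_rpow_and_rpow_sub_nonpos_iff hA hB (one_div_pos.mpr (by linarith))

/-- Under the Gumbel–Hougaard copula with PHR margins `F̄(x)^{λᵢ}` and
`∏ pᵢ = ∏ p*ᵢ ∈ (0,1)`, the likelihood ratio `g_{Y_{1:n}} / g_{Y*_{1:n}}`
(equal to `(1-p)/(1-p*)` at `0` and
`(p/p*) (A/A*)^{1/θ} F̄(x)^{A^{1/θ} - A*^{1/θ}}` for `x > 0`, with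
`A = ∑ λᵢ^θ`, `A* = ∑ (λ*ᵢ)^θ`) is increasing on `[0,∞)` — i.e.
`Y*_{1:n} ≤_lr Y_{1:n}` — if and only if `∑ λᵢ^θ = ∑ (λ*ᵢ)^θ`. -/
theorem smallest_claim_lr_iff_sums {n : ℕ} (hn : 0 < n) (θ : ℝ) (hθ : 1 ≤ θ)
    (Fbar : ℝ → ℝ)
    (hFpos : ∀ x, 0 < Fbar x) (hFle : ∀ x, Fbar x ≤ 1)
    (hF0 : Fbar 0 = 1) (hFanti : StrictAntiOn Fbar (Set.Ici 0))
    (hFcont : Continuous Fbar)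
    (lam lamstar : Fin n → ℝ)
    (hlam : ∀ i, 0 < lam i) (hlamstar : ∀ i, 0 < lamstar i)
    (p pstar : ℝ) (hp : p ∈ Set.Ioo (0:ℝ) 1) (hpstar : pstar ∈ Set.Ioo (0:ℝ) 1)
    (hpp : p = pstar) :
    MonotoneOn (fun x : ℝ =>
        if x = 0 then (1 - p) / (1 - pstar)
        else (p / pstar) * ((∑ i, lam i ^ θ) / (∑ i, lamstar i ^ θ)) ^ (1 / θ) *
          Fbar x ^ ((∑ i, lam i ^ θ) ^ (1 / θ) - (∑ i, lamstar i ^ θ) ^ (1 / θ)))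
      (Set.Ici 0) ↔
      (∑ i, lam i ^ θ) = ∑ i, lamstar i ^ θ :=
  smallest_claim_lr_iff_sums_general hn θ hθ Fbar hFpos hF0 hFanti hFcont lam lamstar hlam hlamstar
    p pstar hp hpp
end

section
/- For the Harris family survival function F̄(x;λ,θ) = (λ F̄(x)^θ / (1 − (1−λ) F̄(x)^θ))^{1/θ} with baseline survival function F̄(x) ∈ [0,1], θ ≥ 1, and λ > 0, F̄(x;λ,θ) is increasing and concave in λ for each fixed x. -/
/-!
Put `t = F̄(x) ^ θ ∈ [0, 1]`. The inner map `λ ↦ λ t / (1 - (1 - λ) t)` is increasing and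
concave on `λ > 0`: its concavity gap at a convex combination `a x + b y` is
`a b t² (1 - t) (x - y)²` divided by positive denominators. Since `0 ≤ 1/θ ≤ 1`, the outer map
`u ↦ u ^ (1/θ)` is increasing and concave on `[0, ∞)`, and an increasing concave function of a
concave function is concave.
-/

open Set

theorem ConcaveOn.comp_of_mapsTo {𝕜 E α β : Type*} [Semiring 𝕜] [PartialOrder 𝕜]
    [AddCommMonoid E] [AddCommMonoid α] [PartialOrder α] [AddCommMonoid β] [PartialOrder β]
    [SMul 𝕜 E] [SMul 𝕜 α] [SMul 𝕜 β] {s : Set E} {t : Set β} {f : E → β} {g : β → α}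
    (hg : ConcaveOn 𝕜 t g) (hf : ConcaveOn 𝕜 s f) (hg' : MonotoneOn g t) (hst : MapsTo f s t) :
    ConcaveOn 𝕜 s (g ∘ f) :=
  ⟨hf.1, fun _ hx _ hy _ _ ha hb hab =>
    (hg.2 (hst hx) (hst hy) ha hb hab).trans <|
      hg' (hg.1 (hst hx) (hst hy) ha hb hab) (hst <| hf.1 hx hy ha hb hab) (hf.2 hx hy ha hb hab)⟩

noncomputable def harrisMap (t l : ℝ) : ℝ := l * t / (1 - (1 - l) * t)

section harrisMap

variable {t : ℝ}

theorem harrisMap_denom_pos (ht₀ : 0 ≤ t) (ht₁ : t ≤ 1) {l : ℝ} (hl : 0 < l) :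
    0 < 1 - (1 - l) * t := by
  rcases ht₁.lt_or_eq with ht₁ | rfl
  · nlinarith [mul_nonneg hl.le ht₀]
  · linarith

theorem harrisMap_nonneg (ht₀ : 0 ≤ t) (ht₁ : t ≤ 1) {l : ℝ} (hl : 0 < l) :
    0 ≤ harrisMap t l :=
  div_nonneg (mul_nonneg hl.le ht₀) (harrisMap_denom_pos ht₀ ht₁ hl).le

theorem monotoneOn_harrisMap (ht₀ : 0 ≤ t) (ht₁ : t ≤ 1) : MonotoneOn (harrisMap t) (Ioi 0) := by
  intro a ha b hb hab
  rw [harrisMap, harrisMap, div_le_div_iff₀ (harrisMap_denom_pos ht₀ ht₁ ha)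
    (harrisMap_denom_pos ht₀ ht₁ hb)]
  nlinarith [mul_nonneg (mul_nonneg ht₀ (sub_nonneg.2 ht₁)) (sub_nonneg.2 hab)]

theorem concaveOn_harrisMap (ht₀ : 0 ≤ t) (ht₁ : t ≤ 1) : ConcaveOn ℝ (Ioi 0) (harrisMap t) := by
  refine ⟨convex_Ioi 0, fun x hx y hy a b ha hb hab => ?_⟩
  have hz : 0 < a * x + b * y := (convex_Ioi 0) hx hy ha hb hab
  have hDx := harrisMap_denom_pos ht₀ ht₁ hx
  have hDy := harrisMap_denom_pos ht₀ ht₁ hy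
  have hDz := harrisMap_denom_pos ht₀ ht₁ hz
  simp only [smul_eq_mul, harrisMap]
  rw [← mul_div_assoc, ← mul_div_assoc, div_add_div _ _ hDx.ne' hDy.ne',
    div_le_div_iff₀ (mul_pos hDx hDy) hDz]
  obtain rfl : b = 1 - a := by linarith
  have gap : (a * x + (1 - a) * y) * t * ((1 - (1 - x) * t) * (1 - (1 - y) * t)) -
      (a * (x * t) * (1 - (1 - y) * t) + (1 - (1 - x) * t) * ((1 - a) * (y * t))) *
        (1 - (1 - (a * x + (1 - a) * y)) * t) = a * (1 - a) * t ^ 2 * (1 - t) * (x - y) ^ 2 := by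
    ring
  have : 0 ≤ a * (1 - a) * t ^ 2 * (1 - t) * (x - y) ^ 2 := by
    have := sub_nonneg.2 ht₁
    positivity
  linarith

end harrisMap

/-- For the Harris family survival function
`F̄(x;λ,θ) = (λ F̄(x)^θ / (1 - (1-λ) F̄(x)^θ))^{1/θ}` with baseline survival value
`s = F̄(x) ∈ [0,1]` and `θ ≥ 1`, the map `λ ↦ F̄(x;λ,θ)` is increasing and concave
on `λ > 0`. -/
theorem harris_survival_increasing_concave (s θ : ℝ)
    (hs : s ∈ Set.Icc (0:ℝ) 1) (hθ : 1 ≤ θ) :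
    MonotoneOn (fun l : ℝ => (l * s ^ θ / (1 - (1 - l) * s ^ θ)) ^ (1 / θ))
        (Set.Ioi 0) ∧
      ConcaveOn ℝ (Set.Ioi 0)
        (fun l : ℝ => (l * s ^ θ / (1 - (1 - l) * s ^ θ)) ^ (1 / θ)) := by
  have hθ₀ : 0 < θ := zero_lt_one.trans_le hθ
  have ht₀ : 0 ≤ s ^ θ := Real.rpow_nonneg hs.1 θ
  have ht₁ : s ^ θ ≤ 1 := Real.rpow_le_one hs.1 hs.2 hθ₀.le
  have hp₀ : 0 ≤ 1 / θ := by positivity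
  have hp₁ : 1 / θ ≤ 1 := (div_le_one hθ₀).2 hθ
  have hmaps : MapsTo (harrisMap (s ^ θ)) (Ioi 0) (Ici 0) :=
    fun _ hl => harrisMap_nonneg ht₀ ht₁ hl
  have hrpow := Real.monotoneOn_rpow_Ici_of_exponent_nonneg hp₀
  exact ⟨hrpow.comp (monotoneOn_harrisMap ht₀ ht₁) hmaps,
    (Real.concaveOn_rpow hp₀ hp₁).comp_of_mapsTo (concaveOn_harrisMap ht₀ ht₁) hrpow hmaps⟩
end

section
/- For the Lomax-exponential survival function F̄(x;α,β,λ) = (λ/(e^{βx} + λ − 1))^α with α ∈ (0,1], β > 0, λ > 0, x ≥ 0, the map λ ↦ F̄(x;α,β,λ) is increasing and concave for each fixed x ≥ 0. -/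
/-!
With `d = e^{βx} - 1 ≥ 0` the survival function is `g(λ)^α` for `g(λ) = λ / (λ + d) = 1 - d / (λ + d)`,
which is nonnegative, increasing and concave on `λ > 0` because `λ ↦ (λ + d)⁻¹` is convex.
Since `y ↦ y^α` is increasing and concave on `[0, ∞)` for `α ∈ [0, 1]`, so is the composite.
-/

open Set

section DivAdd

variable {d : ℝ}

lemma monotoneOn_div_add (hd : 0 ≤ d) : MonotoneOn (fun l => l / (l + d)) (Ioi (-d)) := by
  intro p hp q hq hpq
  rw [mem_Ioi] at hp hq
  rw [div_le_div_iff₀ (by linarith) (by linarith)]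
  nlinarith

lemma concaveOn_div_add (hd : 0 ≤ d) : ConcaveOn ℝ (Ioi (-d)) fun l => l / (l + d) := by
  have hinv : ConvexOn ℝ (Ioi (-d)) fun l => (d + l)⁻¹ := by
    simpa [Function.comp_def, neg_lt_iff_pos_add] using
      (convexOn_zpow (𝕜 := ℝ) (-1)).translate_right d
  refine ((hinv.smul hd).neg.add_const 1).congr fun l hl => ?_
  have : l + d ≠ 0 := by rw [mem_Ioi] at hl; linarith
  simp only [Pi.add_apply, Pi.neg_apply, smul_eq_mul]
  rw [add_comm d l]
  field_simp
  ring

lemma mapsTo_div_add_Ioi_zero_Ici_zero (hd : 0 ≤ d) :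
    MapsTo (fun l => l / (l + d)) (Ioi 0) (Ici 0) :=
  fun l (hl : 0 < l) => div_nonneg hl.le (by linarith)

lemma Ioi_zero_subset_Ioi_neg (hd : 0 ≤ d) : Ioi (0 : ℝ) ⊆ Ioi (-d) :=
  Ioi_subset_Ioi (neg_nonpos.2 hd)

lemma monotoneOn_rpow_div_add {α : ℝ} (hd : 0 ≤ d) (hα : 0 ≤ α) :
    MonotoneOn (fun l => (l / (l + d)) ^ α) (Ioi 0) :=
  (Real.monotoneOn_rpow_Ici_of_exponent_nonneg hα).comp
    ((monotoneOn_div_add hd).mono (Ioi_zero_subset_Ioi_neg hd))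
    (mapsTo_div_add_Ioi_zero_Ici_zero hd)

lemma concaveOn_rpow_div_add {α : ℝ} (hd : 0 ≤ d) (hα₀ : 0 ≤ α) (hα₁ : α ≤ 1) :
    ConcaveOn ℝ (Ioi 0) fun l => (l / (l + d)) ^ α :=
  (Real.concaveOn_rpow hα₀ hα₁).comp_of_mapsTo
    ((concaveOn_div_add hd).subset (Ioi_zero_subset_Ioi_neg hd) (convex_Ioi 0))
    (Real.monotoneOn_rpow_Ici_of_exponent_nonneg hα₀) (mapsTo_div_add_Ioi_zero_Ici_zero hd)

end DivAdd

/-- For the Lomax-exponential survival function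
`F̄(x;α,β,λ) = (λ/(e^{βx} + λ - 1))^α` with `α ∈ (0,1]`, `β > 0`, `x ≥ 0`, the map
`λ ↦ F̄(x;α,β,λ)` is increasing and concave on `λ > 0`. -/
theorem lomax_exponential_increasing_concave (α β x : ℝ)
    (hα0 : 0 < α) (hα1 : α ≤ 1) (hβ : 0 < β) (hx : 0 ≤ x) :
    MonotoneOn (fun l : ℝ => (l / (Real.exp (β * x) + l - 1)) ^ α) (Set.Ioi 0) ∧
      ConcaveOn ℝ (Set.Ioi 0)
        (fun l : ℝ => (l / (Real.exp (β * x) + l - 1)) ^ α) := by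
  have hd : 0 ≤ Real.exp (β * x) - 1 := sub_nonneg.2 (Real.one_le_exp (by positivity))
  have hF : (fun l : ℝ => (l / (Real.exp (β * x) + l - 1)) ^ α)
      = fun l => (l / (l + (Real.exp (β * x) - 1))) ^ α := by
    funext l
    ring_nf
  rw [hF]
  exact ⟨monotoneOn_rpow_div_add hd hα0.le, concaveOn_rpow_div_add hd hα0.le hα1⟩
end

section
/- If C_R is PUOD and λ_{1:n} = min(λ₁,…,λₙ), then for the Harris family margins F̄(x;λᵢ,θ) with θ ≥ 1, (∏ᵢ pᵢ)(λ_{1:n} F̄(x)^θ/(1−(1−λ_{1:n})F̄(x)^θ))^{n/θ} ≤ (∏ᵢ pᵢ) C_R(F̄(x;λ₁,θ),…,F̄(x;λₙ,θ)) ≤ (∏ᵢ pᵢ)(λ_{1:n} F̄(x)^θ/(1−(1−λ_{1:n})F̄(x)^θ))^{1/θ} for all x ≥ 0. -/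
open Finset

/-! The survival margins all lie in `[0, 1]` and increase with `λ`, so each of them is
squeezed between the margin at `λ_{1:n}` and `1`. PUOD bounds the copula below by the product
of the margins, hence by the `n`-th power of the smallest one; the Fréchet–Hoeffding bound
bounds it above by the smallest margin itself. -/

/-- With `t = F̄(x)^θ`, the Harris margin is `F̄(x; a, θ) = (harrisTransform a t)^{1/θ}`. -/
noncomputable def harrisTransform (a t : ℝ) : ℝ := a * t / (1 - (1 - a) * t)

def IsPUOD {ι : Type*} [Fintype ι] (C : (ι → ℝ) → ℝ) : Prop :=
  ∀ u : ι → ℝ, (∀ i, u i ∈ Set.Icc (0:ℝ) 1) → ∏ i, u i ≤ C u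

section HarrisTransform

variable {a b t : ℝ}

lemma harrisTransform_denom_pos (ha : 0 < a) (ht : t ∈ Set.Icc (0:ℝ) 1) :
    0 < 1 - (1 - a) * t := by
  obtain ⟨ht0, ht1⟩ := ht
  have : 1 - (1 - a) * t = (1 - t) + a * t := by ring
  rw [this]
  rcases ht1.lt_or_eq with ht1 | rfl
  · nlinarith
  · linarith

lemma harrisTransform_mem_Icc (ha : 0 < a) (ht : t ∈ Set.Icc (0:ℝ) 1) :
    harrisTransform a t ∈ Set.Icc (0:ℝ) 1 := by
  have hd := harrisTransform_denom_pos ha ht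
  refine ⟨div_nonneg (mul_nonneg ha.le ht.1) hd.le, ?_⟩
  rw [harrisTransform, div_le_one hd]
  nlinarith [ht.2]

lemma harrisTransform_mono (ha : 0 < a) (hab : a ≤ b) (ht : t ∈ Set.Icc (0:ℝ) 1) :
    harrisTransform a t ≤ harrisTransform b t := by
  rw [harrisTransform, harrisTransform,
    div_le_div_iff₀ (harrisTransform_denom_pos ha ht)
      (harrisTransform_denom_pos (ha.trans_le hab) ht)]
  nlinarith [mul_nonneg (mul_nonneg (sub_nonneg.mpr hab) ht.1) (sub_nonneg.mpr ht.2)]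

lemma harrisTransform_rpow_mem_Icc (ha : 0 < a) (ht : t ∈ Set.Icc (0:ℝ) 1) {r : ℝ}
    (hr : 0 ≤ r) : harrisTransform a t ^ r ∈ Set.Icc (0:ℝ) 1 := by
  obtain ⟨h0, h1⟩ := harrisTransform_mem_Icc ha ht
  exact ⟨Real.rpow_nonneg h0 r, Real.rpow_le_one h0 h1 hr⟩

lemma harrisTransform_rpow_mono (ha : 0 < a) (hab : a ≤ b) (ht : t ∈ Set.Icc (0:ℝ) 1)
    {r : ℝ} (hr : 0 ≤ r) : harrisTransform a t ^ r ≤ harrisTransform b t ^ r :=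
  Real.rpow_le_rpow (harrisTransform_mem_Icc ha ht).1 (harrisTransform_mono ha hab ht) hr

end HarrisTransform

lemma IsPUOD.pow_card_le {ι : Type*} [Fintype ι] {C : (ι → ℝ) → ℝ} (hC : IsPUOD C)
    {u : ι → ℝ} (hu : ∀ i, u i ∈ Set.Icc (0:ℝ) 1) {m : ℝ} (hm : 0 ≤ m) (hmu : ∀ i, m ≤ u i) :
    m ^ Fintype.card ι ≤ C u :=
  calc m ^ Fintype.card ι = ∏ _i : ι, m := by rw [prod_const, card_univ]
    _ ≤ ∏ i, u i := prod_le_prod (fun _ _ => hm) (fun i _ => hmu i)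
    _ ≤ C u := hC u hu

lemma Real.rpow_natCast_div {x : ℝ} (hx : 0 ≤ x) (n : ℕ) (θ : ℝ) :
    x ^ ((n : ℝ) / θ) = (x ^ (1 / θ)) ^ n := by
  rw [← Real.rpow_natCast, ← Real.rpow_mul hx, one_div_mul_eq_div]

/-- Bounds for the survival function of the smallest claim amount with Harris family
margins `F̄(x;λᵢ,θ) = (λᵢ F̄(x)^θ/(1-(1-λᵢ)F̄(x)^θ))^{1/θ}`, `θ ≥ 1`, when the survival
copula `C` is PUOD (and satisfies the Fréchet–Hoeffding upper bound):
`(∏ pᵢ)(λ_{1:n} F̄(x)^θ/(1-(1-λ_{1:n})F̄(x)^θ))^{n/θ} ≤ (∏ pᵢ) C(…) ≤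
 (∏ pᵢ)(λ_{1:n} F̄(x)^θ/(1-(1-λ_{1:n})F̄(x)^θ))^{1/θ}` for all `x ≥ 0`. -/
theorem smallest_claim_harris_bounds {n : ℕ} (hn : 0 < n) (θ : ℝ) (hθ : 1 ≤ θ)
    (C : (Fin n → ℝ) → ℝ) (Fb : ℝ → ℝ) (p lam : Fin n → ℝ)
    (hFb : ∀ x, Fb x ∈ Set.Icc (0:ℝ) 1)
    (hlam : ∀ i, 0 < lam i)
    (hp : ∀ i, p i ∈ Set.Icc (0:ℝ) 1)
    (hPUOD : ∀ u : Fin n → ℝ, (∀ i, u i ∈ Set.Icc (0:ℝ) 1) → ∏ i, u i ≤ C u)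
    (hUpper : ∀ u : Fin n → ℝ, (∀ i, u i ∈ Set.Icc (0:ℝ) 1) → ∀ i, C u ≤ u i) :
    ∀ x : ℝ, 0 ≤ x →
      (∏ i, p i) * ((⨅ i, lam i) * Fb x ^ θ /
          (1 - (1 - ⨅ i, lam i) * Fb x ^ θ)) ^ ((n : ℝ) / θ) ≤
          (∏ i, p i) * C (fun i =>
            (lam i * Fb x ^ θ / (1 - (1 - lam i) * Fb x ^ θ)) ^ (1 / θ)) ∧
        (∏ i, p i) * C (fun i =>
            (lam i * Fb x ^ θ / (1 - (1 - lam i) * Fb x ^ θ)) ^ (1 / θ)) ≤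
          (∏ i, p i) * ((⨅ i, lam i) * Fb x ^ θ /
            (1 - (1 - ⨅ i, lam i) * Fb x ^ θ)) ^ (1 / θ) := by
  intro x _
  have : Nonempty (Fin n) := ⟨⟨0, hn⟩⟩
  obtain ⟨i₀, hi₀⟩ := exists_eq_ciInf_of_finite (f := lam)
  have hr : 0 ≤ 1 / θ := by positivity
  have ht : Fb x ^ θ ∈ Set.Icc (0:ℝ) 1 :=
    ⟨Real.rpow_nonneg (hFb x).1 θ, Real.rpow_le_one (hFb x).1 (hFb x).2 (by linarith)⟩
  set u : Fin n → ℝ := fun i => harrisTransform (lam i) (Fb x ^ θ) ^ (1 / θ)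
  have hu : ∀ i, u i ∈ Set.Icc (0:ℝ) 1 := fun i => harrisTransform_rpow_mem_Icc (hlam i) ht hr
  have hp0 : 0 ≤ ∏ i, p i := prod_nonneg fun i _ => (hp i).1
  rw [← hi₀]
  change (∏ i, p i) * harrisTransform (lam i₀) (Fb x ^ θ) ^ ((n : ℝ) / θ) ≤ (∏ i, p i) * C u ∧
    (∏ i, p i) * C u ≤ (∏ i, p i) * u i₀
  rw [Real.rpow_natCast_div (harrisTransform_mem_Icc (hlam i₀) ht).1]
  refine ⟨mul_le_mul_of_nonneg_left ?_ hp0, mul_le_mul_of_nonneg_left (hUpper u hu i₀) hp0⟩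
  simpa only [Fintype.card_fin] using IsPUOD.pow_card_le hPUOD hu (hu i₀).1 fun i =>
    harrisTransform_rpow_mono (hlam i₀) (hi₀ ▸ ciInf_le (Finite.bddBelow_range lam) i) ht hr
end
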